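/- Let L₀ be a Lindblad generator of the form L₀a = Σ_j ([ℓ_j*,a]ℓ_j + ℓ_j*[a,ℓ_j]) on A = End(H) that is self-adjoint on L₂(σ) for a faithful state σ. Then its Dirichlet form satisfies E_σ(a) := -⟨L₀a, a⟩_σ = Σ_j ‖[ℓ_j*, a]‖_σ², and consequently E_σ(a) = 0 if and only if a commutes with all ℓ_j and ℓ_j*. -/

import Mathlib

noncomputable section

open ContinuousLinearMap

/-- The algebra `A = End(H)` for `H = ℂⁿ` a finite-dimensional Hilbert space. -/
abbrev QA (n : ℕ) := EuclideanSpace ℂ (Fin n) →L[ℂ] EuclideanSpace ℂ (Fin n)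

/-- The trace of an operator on the finite-dimensional Hilbert space. -/
noncomputable def trC {n : ℕ} (a : QA n) : ℂ :=
  LinearMap.trace ℂ (EuclideanSpace ℂ (Fin n)) (a : _ →ₗ[ℂ] _)

/-- The GNS inner product `⟨a,b⟩_σ = tr(a* σ b)`. -/
noncomputable def gns {n : ℕ} (σ a b : QA n) : ℂ :=
  trC ((ContinuousLinearMap.adjoint a ∘L σ) ∘L b)

/-- The Lindblad generator `L₀ a = Σ_j ([ℓ_j*, a] ℓ_j + ℓ_j* [a, ℓ_j])`. -/
noncomputable def lindblad {n N : ℕ} (ℓ : Fin N → QA n) (a : QA n) : QA n :=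
  ∑ j : Fin N,
    ((ContinuousLinearMap.adjoint (ℓ j) ∘L a - a ∘L ContinuousLinearMap.adjoint (ℓ j)) ∘L ℓ j
      + ContinuousLinearMap.adjoint (ℓ j) ∘L (a ∘L ℓ j - ℓ j ∘L a))

/-- The commutator `[ℓ_j*, a]`. -/
noncomputable def commStar {n : ℕ} (ℓ a : QA n) : QA n :=
  ContinuousLinearMap.adjoint ℓ ∘L a - a ∘L ContinuousLinearMap.adjoint ℓ

/-!
Pairing the product rule `L₀(x y*) = L₀(x) y* + x L₀(y*) + 2 Σ_j [ℓ_j*, x] [ℓ_j*, y]*`, an identity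
in any star ring, with the functional `tr(σ ·)` gives the polarized identity
`-⟨L₀a, b⟩_σ = Σ_j ⟨[ℓ_j*, a], [ℓ_j*, b]⟩_σ`: self-adjointness against `1` shows `tr(σ L₀ c) = 0`,
and against `a, b` identifies the two remaining terms.

Writing `σ = s* s` gives `⟨x, x⟩_σ = Σ_i ‖s x eᵢ‖²`, so `⟨·,·⟩_σ` is faithful as `σ` is injective.
If `E_σ(a) = 0`, all `[ℓ_j*, a]` vanish; polarization against `b = L₀a` then forces `L₀a = 0`, so
`L₀a* = (L₀a)* = 0` and `E_σ(a*) = 0`, whence `[ℓ_j*, a*] = [a, ℓ_j]* = 0` as well.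
-/

section StarRing

variable {R ι : Type*} [Ring R] [StarRing R] [Fintype ι]

def lindbladGenerator (ℓ : ι → R) (x : R) : R :=
  ∑ j, (⁅star (ℓ j), x⁆ * ℓ j + star (ℓ j) * ⁅x, ℓ j⁆)

lemma star_lie (x y : R) : star ⁅x, y⁆ = ⁅star y, star x⁆ := by
  simp only [Ring.lie_def, star_sub, star_mul]

lemma lindbladGenerator_one (ℓ : ι → R) : lindbladGenerator ℓ 1 = 0 :=
  Finset.sum_eq_zero fun j _ => by simp only [Ring.lie_def]; noncomm_ring

lemma star_lindbladGenerator (ℓ : ι → R) (x : R) :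
    star (lindbladGenerator ℓ x) = lindbladGenerator ℓ (star x) := by
  simp only [lindbladGenerator, star_sum, star_add, star_mul, star_lie, star_star]
  refine Finset.sum_congr rfl fun j _ => ?_
  simp only [Ring.lie_def]
  noncomm_ring

lemma lindbladGenerator_mul_star (ℓ : ι → R) (x y : R) :
    lindbladGenerator ℓ (x * star y) = lindbladGenerator ℓ x * star y
      + x * lindbladGenerator ℓ (star y) + 2 * ∑ j, ⁅star (ℓ j), x⁆ * star ⁅star (ℓ j), y⁆ := by
  simp only [lindbladGenerator, star_lie, star_star, Finset.sum_mul, Finset.mul_sum,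
    ← Finset.sum_add_distrib]
  refine Finset.sum_congr rfl fun j _ => ?_
  simp only [Ring.lie_def]
  noncomm_ring

end StarRing

lemma lindblad_eq_lindbladGenerator {n N : ℕ} (ℓ : Fin N → QA n) :
    lindblad ℓ = lindbladGenerator ℓ := rfl

lemma commStar_eq_lie {n : ℕ} (ℓ a : QA n) : commStar ℓ a = ⁅star ℓ, a⁆ := rfl

section GNS

variable {n N : ℕ}

lemma trC_add (a b : QA n) : trC (a + b) = trC a + trC b := map_add _ _ _

lemma trC_sum {ι : Type*} (s : Finset ι) (f : ι → QA n) :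
    trC (∑ i ∈ s, f i) = ∑ i ∈ s, trC (f i) := by
  simp only [trC, toLinearMap_sum, map_sum]

lemma trC_mul_comm (a b : QA n) : trC (a * b) = trC (b * a) :=
  LinearMap.trace_mul_comm ℂ (M := EuclideanSpace ℂ (Fin n)) a b

lemma gns_eq_trC (σ a b : QA n) : gns σ a b = trC (σ * (b * star a)) := by
  rw [gns, ← star_eq_adjoint, ← mul_def, ← mul_def, mul_assoc, trC_mul_comm, mul_assoc]

lemma gns_zero_left (σ b : QA n) : gns σ 0 b = 0 := by
  simp [gns, trC]

lemma trC_mul_lindblad_eq_zero {σ : QA n} {ℓ : Fin N → QA n}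
    (hsa : ∀ a b : QA n, gns σ (lindblad ℓ a) b = gns σ a (lindblad ℓ b)) (c : QA n) :
    trC (σ * lindblad ℓ c) = 0 := by
  have h := hsa 1 c
  rw [lindblad_eq_lindbladGenerator, lindbladGenerator_one, gns_zero_left, gns_eq_trC,
    star_one, mul_one] at h
  exact h.symm

lemma neg_gns_lindblad {σ : QA n} {ℓ : Fin N → QA n}
    (hsa : ∀ a b : QA n, gns σ (lindblad ℓ a) b = gns σ a (lindblad ℓ b)) (a b : QA n) :
    -gns σ (lindblad ℓ a) b = ∑ j, gns σ (commStar (ℓ j) a) (commStar (ℓ j) b) := by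
  have hinv := trC_mul_lindblad_eq_zero hsa (b * star a)
  rw [lindblad_eq_lindbladGenerator, lindbladGenerator_mul_star, ← star_lindbladGenerator,
    ← lindblad_eq_lindbladGenerator] at hinv
  simp only [mul_add, two_mul, Finset.mul_sum, Finset.sum_add_distrib, trC_add, trC_sum,
    ← gns_eq_trC, ← commStar_eq_lie] at hinv
  linear_combination (-1 / 2 : ℂ) * hinv - (1 / 2 : ℂ) * hsa a b

end GNS

open scoped ComplexOrder

lemma ContinuousLinearMap.trace_adjoint_comp_self {𝕜 E F ι : Type*} [RCLike 𝕜] [Fintype ι]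
    [NormedAddCommGroup E] [InnerProductSpace 𝕜 E] [CompleteSpace E]
    [NormedAddCommGroup F] [InnerProductSpace 𝕜 F] [CompleteSpace F]
    (T : E →L[𝕜] F) (b : OrthonormalBasis ι 𝕜 E) :
    LinearMap.trace 𝕜 E ((adjoint T ∘L T : E →L[𝕜] E) : E →ₗ[𝕜] E) =
      ((∑ i, ‖T (b i)‖ ^ 2 : ℝ) : 𝕜) := by
  rw [LinearMap.trace_eq_sum_inner _ b, RCLike.ofReal_sum]
  refine Finset.sum_congr rfl fun i _ => ?_
  rw [coe_coe, comp_apply, adjoint_inner_right, inner_self_eq_norm_sq_to_K, RCLike.ofReal_pow]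

section Positivity

variable {n : ℕ}

lemma gns_star_mul_self (s x : QA n) :
    gns (star s * s) x x = ((∑ i, ‖s (x (EuclideanSpace.basisFun (Fin n) ℂ i))‖ ^ 2 : ℝ) : ℂ) := by
  refine Eq.trans ?_ (trace_adjoint_comp_self (s ∘L x) (EuclideanSpace.basisFun (Fin n) ℂ))
  rw [gns, trC, adjoint_comp, ← star_eq_adjoint, ← star_eq_adjoint, mul_def, comp_assoc,
    comp_assoc, comp_assoc]

lemma exists_eq_star_mul_self {σ : QA n} (hσ : σ.IsPositive) : ∃ s, σ = star s * s :=
  CStarAlgebra.nonneg_iff_eq_star_mul_self.mp ((nonneg_iff_isPositive σ).mpr hσ)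

lemma gns_self_nonneg {σ : QA n} (hσ : σ.IsPositive) (x : QA n) : 0 ≤ gns σ x x := by
  obtain ⟨s, rfl⟩ := exists_eq_star_mul_self hσ
  rw [gns_star_mul_self]
  exact Complex.zero_le_real.mpr (Finset.sum_nonneg fun i _ => sq_nonneg _)

lemma eq_zero_of_gns_self_eq_zero {σ : QA n} (hσ : σ.IsPositive) (hinj : Function.Injective σ)
    {x : QA n} (hx : gns σ x x = 0) : x = 0 := by
  obtain ⟨s, rfl⟩ := exists_eq_star_mul_self hσ
  rw [gns_star_mul_self, Complex.ofReal_eq_zero,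
    Finset.sum_eq_zero_iff_of_nonneg fun i _ => sq_nonneg _] at hx
  have hb : ∀ i, x (EuclideanSpace.basisFun (Fin n) ℂ i) = 0 := fun i => by
    have hs : s (x (EuclideanSpace.basisFun (Fin n) ℂ i)) = 0 := by
      simpa using hx i (Finset.mem_univ i)
    exact hinj (by simp only [mul_def, comp_apply, hs, map_zero])
  exact coe_injective ((EuclideanSpace.basisFun (Fin n) ℂ).toBasis.ext (by simpa using hb))

end Positivity

section Kernel

variable {n N : ℕ} {σ : QA n} {ℓ : Fin N → QA n}

lemma commStar_eq_zero_iff (l a : QA n) : commStar l a = 0 ↔ adjoint l ∘L a = a ∘L adjoint l :=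
  sub_eq_zero

lemma commStar_star_eq_zero_iff (l a : QA n) : commStar l (star a) = 0 ↔ l ∘L a = a ∘L l := by
  rw [commStar_eq_lie, ← star_lie a l, star_eq_zero (x := ⁅a, l⁆), Ring.lie_def, sub_eq_zero,
    eq_comm]
  rfl

lemma commStar_eq_zero_of_neg_gns_lindblad_self_eq_zero (hσ : σ.IsPositive)
    (hinj : Function.Injective σ)
    (hsa : ∀ a b : QA n, gns σ (lindblad ℓ a) b = gns σ a (lindblad ℓ b)) {a : QA n}
    (ha : -gns σ (lindblad ℓ a) a = 0) (j : Fin N) : commStar (ℓ j) a = 0 := by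
  rw [neg_gns_lindblad hsa, Finset.sum_eq_zero_iff_of_nonneg fun j _ => gns_self_nonneg hσ _] at ha
  exact eq_zero_of_gns_self_eq_zero hσ hinj (ha j (Finset.mem_univ j))

lemma lindblad_eq_zero_of_commStar_eq_zero (hσ : σ.IsPositive) (hinj : Function.Injective σ)
    (hsa : ∀ a b : QA n, gns σ (lindblad ℓ a) b = gns σ a (lindblad ℓ b)) {a : QA n}
    (ha : ∀ j, commStar (ℓ j) a = 0) : lindblad ℓ a = 0 := by
  have h := neg_gns_lindblad hsa a (lindblad ℓ a)
  simp only [ha, gns_zero_left, Finset.sum_const_zero, neg_eq_zero] at h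
  exact eq_zero_of_gns_self_eq_zero hσ hinj h

lemma neg_gns_lindblad_self_eq_zero_iff (hσ : σ.IsPositive) (hinj : Function.Injective σ)
    (hsa : ∀ a b : QA n, gns σ (lindblad ℓ a) b = gns σ a (lindblad ℓ b)) (a : QA n) :
    -gns σ (lindblad ℓ a) a = 0 ↔ ∀ j, commStar (ℓ j) a = 0 ∧ commStar (ℓ j) (star a) = 0 := by
  constructor
  · intro ha
    have hδ := commStar_eq_zero_of_neg_gns_lindblad_self_eq_zero hσ hinj hsa ha
    have hL : lindblad ℓ (star a) = 0 := by
      rw [lindblad_eq_lindbladGenerator, ← star_lindbladGenerator, ← lindblad_eq_lindbladGenerator,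
        lindblad_eq_zero_of_commStar_eq_zero hσ hinj hsa hδ, star_zero]
    have hstar : -gns σ (lindblad ℓ (star a)) (star a) = 0 := by
      rw [hL, gns_zero_left, neg_zero]
    exact fun j => ⟨hδ j, commStar_eq_zero_of_neg_gns_lindblad_self_eq_zero hσ hinj hsa hstar j⟩
  · intro h
    rw [neg_gns_lindblad hsa]
    exact Finset.sum_eq_zero fun j _ => by rw [(h j).1, gns_zero_left]

end Kernel

theorem dirichlet_form_and_kernel_general (n N : ℕ) (σ σinv : QA n)
    (hσpos : σ.IsPositive)
    (hσinv' : σinv ∘L σ = 1)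
    (ℓ : Fin N → QA n)
    (hsa : ∀ a b : QA n, gns σ (lindblad ℓ a) b = gns σ a (lindblad ℓ b)) :
    (∀ a : QA n,
        -(gns σ (lindblad ℓ a) a) = ∑ j : Fin N, gns σ (commStar (ℓ j) a) (commStar (ℓ j) a))
    ∧ (∀ a : QA n,
        -(gns σ (lindblad ℓ a) a) = 0 ↔
          ∀ j : Fin N, ℓ j ∘L a = a ∘L ℓ j ∧
            ContinuousLinearMap.adjoint (ℓ j) ∘L a = a ∘L ContinuousLinearMap.adjoint (ℓ j)) := by
  have hinj : Function.Injective σ :=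
    Function.LeftInverse.injective (g := σinv) fun v => by simpa using congrArg (· v) hσinv'
  refine ⟨fun a => neg_gns_lindblad hsa a a, fun a => ?_⟩
  rw [neg_gns_lindblad_self_eq_zero_iff hσpos hinj hsa]
  exact forall_congr' fun j => by
    rw [commStar_star_eq_zero_iff, commStar_eq_zero_iff, and_comm]

/-- For a Lindblad generator `L₀ a = Σ_j ([ℓ_j*,a]ℓ_j + ℓ_j*[a,ℓ_j])` self-adjoint on
`L₂(σ)` for a faithful state `σ`, the Dirichlet form satisfies
`E_σ(a) = -⟨L₀ a, a⟩_σ = Σ_j ‖[ℓ_j*, a]‖_σ²`, and consequently `E_σ(a) = 0` iff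
`a` commutes with all `ℓ_j` and `ℓ_j*`. -/
theorem dirichlet_form_and_kernel (n N : ℕ) (σ σinv : QA n)
    (hσpos : σ.IsPositive) (hσtr : trC σ = 1)
    (hσinv : σ ∘L σinv = 1) (hσinv' : σinv ∘L σ = 1)
    (ℓ : Fin N → QA n)
    (hsa : ∀ a b : QA n, gns σ (lindblad ℓ a) b = gns σ a (lindblad ℓ b)) :
    (∀ a : QA n,
        -(gns σ (lindblad ℓ a) a) = ∑ j : Fin N, gns σ (commStar (ℓ j) a) (commStar (ℓ j) a))
    ∧ (∀ a : QA n,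
        -(gns σ (lindblad ℓ a) a) = 0 ↔
          ∀ j : Fin N, ℓ j ∘L a = a ∘L ℓ j ∧
            ContinuousLinearMap.adjoint (ℓ j) ∘L a = a ∘L ContinuousLinearMap.adjoint (ℓ j)) :=
  dirichlet_form_and_kernel_general n N σ σinv hσpos hσinv' ℓ hsa
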